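/- arXiv:2403.09170 — 2 statements merged into one kernel-verified Lean document; each statement's English description precedes it below -/
import Mathlib

section
/- For any N×n real matrices A (of rank r ≥ 1) and E and any 1 ≤ k ≤ r, the k-th largest singular value of A + E satisfies σ̃_k ≥ σ_k − ‖U_kᵀ·E·V_k‖, where U_k = (u_1,…,u_k) and V_k = (v_1,…,v_k). -/
open MeasureTheory ProbabilityTheory Matrix

noncomputable section

/-- ℓ²→ℓ² operator (spectral) norm of a real matrix. -/
def opNorm {m n : Type*} [Fintype m] [Fintype n] [DecidableEq n]
    (M : Matrix m n ℝ) : ℝ :=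
  ‖LinearMap.toContinuousLinearMap (Matrix.toEuclideanLin M)‖

/-- ℓ²→ℓ² operator (spectral) norm of a complex matrix. -/
def opNormC {m n : Type*} [Fintype m] [Fintype n] [DecidableEq n]
    (M : Matrix m n ℂ) : ℝ :=
  ‖LinearMap.toContinuousLinearMap (Matrix.toEuclideanLin M)‖

/-- Euclidean norm of a finitely indexed real vector. -/
def vnorm {n : Type*} [Fintype n] (x : n → ℝ) : ℝ :=
  Real.sqrt (∑ i, (x i) ^ 2)

/-- `‖M‖_{2,∞}`: the maximum Euclidean norm of the rows of `M`. -/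
def twoInf {m n : Type*} [Fintype m] [Fintype n] (M : Matrix m n ℝ) : ℝ :=
  ⨆ i, vnorm (M i)

/-- The diagonal matrix `diag (σ 1, …, σ m)` built from a 1-indexed sequence `σ`. -/
def sdiag {m : ℕ} (σ : ℕ → ℝ) : Matrix (Fin m) (Fin m) ℝ :=
  Matrix.of fun i j => if i = j then σ ((i : ℕ) + 1) else 0

/-- Orthogonal projection `W_{k,s} W_{k,s}ᵀ` onto the span of the (1-indexed)
columns `k,…,s` of `W`. -/
def projSlice {N m : ℕ} (W : Matrix (Fin N) (Fin m) ℝ) (k s : ℕ) :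
    Matrix (Fin N) (Fin N) ℝ :=
  Matrix.of fun a b =>
    ∑ j : Fin m, if k ≤ (j : ℕ) + 1 ∧ (j : ℕ) + 1 ≤ s then W a j * W b j else 0

/-- `‖·‖_{2,∞}` of the submatrix of `M` given by the (1-indexed) columns `k,…,s`. -/
def sliceTwoInf {N m : ℕ} (M : Matrix (Fin N) (Fin m) ℝ) (k s : ℕ) : ℝ :=
  ⨆ a, Real.sqrt (∑ j : Fin m,
    if k ≤ (j : ℕ) + 1 ∧ (j : ℕ) + 1 ≤ s then (M a j) ^ 2 else 0)

/-- `η = (11 b²/(b−1)²) √(2 (log 9) r + (K+7) log(N+n))`. -/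
def eta (N n r : ℕ) (K b : ℝ) : ℝ :=
  11 * b ^ 2 / (b - 1) ^ 2 *
    Real.sqrt (2 * Real.log 9 * r + (K + 7) * Real.log ((N : ℝ) + n))

/-- `χ(b) = 1 + 1/(4b(b−1))`. -/
def chi (b : ℝ) : ℝ := 1 + 1 / (4 * b * (b - 1))

/-- `ξ(b) = 1 + 1/(2(b−1)²)`. -/
def xib (b : ℝ) : ℝ := 1 + 1 / (2 * (b - 1) ^ 2)

/-- `γ = (9 b²/(b−1)²) √(r (K+7) log(N+n))`. -/
def gam (N n r : ℕ) (K b : ℝ) : ℝ :=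
  9 * b ^ 2 / (b - 1) ^ 2 *
    Real.sqrt ((r : ℝ) * (K + 7) * Real.log ((N : ℝ) + n))

/-- `min {δ_{k-1}, δ_s}` where `δ_j = σ_j − σ_{j+1}` (1-indexed) and `δ_0 = ∞`
(so for `k = 1` the minimum is just `δ_s`). -/
def dmin (σ : ℕ → ℝ) (k s : ℕ) : ℝ :=
  if k = 1 then σ s - σ (s + 1) else min (σ (k - 1) - σ k) (σ s - σ (s + 1))

/-- The symmetric dilation `ℰ = [[0, E], [Eᵀ, 0]]` of a rectangular matrix `E`. -/
def dil {N n : ℕ} (E : Matrix (Fin N) (Fin n) ℝ) :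
    Matrix (Fin N ⊕ Fin n) (Fin N ⊕ Fin n) ℝ :=
  Matrix.fromBlocks 0 E Eᵀ 0

/-- Complex resolvent `G(z) = (z I − ℰ)⁻¹` of the dilation. -/
def resolvC {N n : ℕ} (z : ℂ) (E : Matrix (Fin N) (Fin n) ℝ) :
    Matrix (Fin N ⊕ Fin n) (Fin N ⊕ Fin n) ℂ :=
  (z • (1 : Matrix (Fin N ⊕ Fin n) (Fin N ⊕ Fin n) ℂ) -
      (dil E).map (Complex.ofReal))⁻¹

/-- `φ₁(z) = z − ∑_{t=N+1}^{N+n} G(z)_{tt}` (complex version). -/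
def phi1C {N n : ℕ} (z : ℂ) (E : Matrix (Fin N) (Fin n) ℝ) : ℂ :=
  z - ∑ t : Fin n, resolvC z E (Sum.inr t) (Sum.inr t)

/-- `φ₂(z) = z − ∑_{t=1}^{N} G(z)_{tt}` (complex version). -/
def phi2C {N n : ℕ} (z : ℂ) (E : Matrix (Fin N) (Fin n) ℝ) : ℂ :=
  z - ∑ t : Fin N, resolvC z E (Sum.inl t) (Sum.inl t)

/-- Real resolvent `G(z) = (z I − ℰ)⁻¹` of the dilation, for real `z`. -/
def resolvR {N n : ℕ} (z : ℝ) (E : Matrix (Fin N) (Fin n) ℝ) :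
    Matrix (Fin N ⊕ Fin n) (Fin N ⊕ Fin n) ℝ :=
  (z • (1 : Matrix (Fin N ⊕ Fin n) (Fin N ⊕ Fin n) ℝ) - dil E)⁻¹

/-- `φ₁(z)` for real `z` (equals the complex version at a real point). -/
def phi1R {N n : ℕ} (z : ℝ) (E : Matrix (Fin N) (Fin n) ℝ) : ℝ :=
  z - ∑ t : Fin n, resolvR z E (Sum.inr t) (Sum.inr t)

/-- `φ₂(z)` for real `z` (equals the complex version at a real point). -/
def phi2R {N n : ℕ} (z : ℝ) (E : Matrix (Fin N) (Fin n) ℝ) : ℝ :=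
  z - ∑ t : Fin N, resolvR z E (Sum.inl t) (Sum.inl t)

/-- `Φ(z)`: diagonal matrix whose first `N` diagonal entries are `1/φ₁(z)` and whose
last `n` diagonal entries are `1/φ₂(z)`. -/
def PhiC {N n : ℕ} (z : ℂ) (E : Matrix (Fin N) (Fin n) ℝ) :
    Matrix (Fin N ⊕ Fin n) (Fin N ⊕ Fin n) ℂ :=
  Matrix.of fun p q =>
    if p = q then Sum.elim (fun _ => (phi1C z E)⁻¹) (fun _ => (phi2C z E)⁻¹) p else 0

/-- The `(N+n) × 2r` matrix `𝒰` of eigenvectors of the dilation of `A = U D Vᵀ`. -/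
def calU {N n r : ℕ} (U : Matrix (Fin N) (Fin r) ℝ) (V : Matrix (Fin n) (Fin r) ℝ) :
    Matrix (Fin N ⊕ Fin n) (Fin r ⊕ Fin r) ℝ :=
  Matrix.fromBlocks ((Real.sqrt 2)⁻¹ • U) ((Real.sqrt 2)⁻¹ • U)
    ((Real.sqrt 2)⁻¹ • V) (-((Real.sqrt 2)⁻¹ • V))

/-- Schatten `p`-norm: `(∑ᵢ sᵢ(M)ᵖ)^{1/p}`, where the singular values `sᵢ(M)` are the
square roots of the eigenvalues of `Mᴴ M`. -/
def schatten (p : ℝ) {m r : ℕ} (M : Matrix (Fin m) (Fin r) ℝ) : ℝ :=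
  (∑ i, Real.sqrt ((Matrix.isHermitian_conjTranspose_mul_self M).eigenvalues i) ^ p) ^ (1 / p)

/-!
The easy half of the Courant–Fischer argument. By a dimension count there is a unit vector
`c ∈ ℝᵏ` such that `x = V_k c` is orthogonal to the top `k - 1` right singular vectors of `A + E`;
on that subspace `A + E` has norm at most `σ̃_k`, so `‖(A + E) x‖ ≤ σ̃_k`. On the other hand
`U_kᵀ (A + E) x = diag(σ_1, …, σ_k) c + U_kᵀ E V_k c` has norm at least `σ_k - ‖U_kᵀ E V_k‖`,
and `U_kᵀ` does not increase norms.
-/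

section EuclideanNorm

variable {ι κ : Type*} [Fintype ι] [Fintype κ]

lemma vnorm_eq_norm_toLp (v : ι → ℝ) : vnorm v = ‖WithLp.toLp 2 v‖ := by
  simp [vnorm, EuclideanSpace.norm_eq]

lemma vnorm_nonneg (v : ι → ℝ) : 0 ≤ vnorm v := Real.sqrt_nonneg _

lemma vnorm_sq (v : ι → ℝ) : vnorm v ^ 2 = v ⬝ᵥ v := by
  rw [vnorm, Real.sq_sqrt (by positivity)]
  simp [dotProduct, sq]

lemma vnorm_eq_zero {v : ι → ℝ} : vnorm v = 0 ↔ v = 0 := by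
  simp [vnorm_eq_norm_toLp]

lemma vnorm_smul (a : ℝ) (v : ι → ℝ) : vnorm (a • v) = |a| * vnorm v := by
  simp only [vnorm_eq_norm_toLp, WithLp.toLp_smul, norm_smul, Real.norm_eq_abs]

lemma vnorm_sub_le (v w : ι → ℝ) : vnorm (v - w) ≤ vnorm v + vnorm w := by
  simpa only [vnorm_eq_norm_toLp, WithLp.toLp_sub] using norm_sub_le _ _

lemma dotProduct_le_vnorm_mul_vnorm (v w : ι → ℝ) : v ⬝ᵥ w ≤ vnorm v * vnorm w := by
  simpa [vnorm_eq_norm_toLp, EuclideanSpace.inner_toLp_toLp, dotProduct_comm] using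
    real_inner_le_norm (WithLp.toLp 2 v) (WithLp.toLp 2 w)

lemma vnorm_le_vnorm_of_abs_le {v w : ι → ℝ} (h : ∀ i, |v i| ≤ |w i|) : vnorm v ≤ vnorm w :=
  Real.sqrt_le_sqrt (Finset.sum_le_sum fun i _ => sq_le_sq.2 (h i))

lemma vnorm_mulVec_le_opNorm [DecidableEq κ] (M : Matrix ι κ ℝ) (v : κ → ℝ) :
    vnorm (M *ᵥ v) ≤ opNorm M * vnorm v := by
  rw [vnorm_eq_norm_toLp, vnorm_eq_norm_toLp]
  exact (toEuclideanLin M).toContinuousLinearMap.le_opNorm (WithLp.toLp 2 v)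

end EuclideanNorm

section OrthonormalColumns

variable {ι κ : Type*} [Fintype ι] [Fintype κ] [DecidableEq κ] {P : Matrix ι κ ℝ}

lemma vnorm_mulVec_of_transpose_mul_self_eq_one (hP : Pᵀ * P = 1) (v : κ → ℝ) :
    vnorm (P *ᵥ v) = vnorm v := by
  have h : vnorm (P *ᵥ v) ^ 2 = vnorm v ^ 2 := by
    rw [vnorm_sq, vnorm_sq, dotProduct_mulVec, ← mulVec_transpose, mulVec_mulVec, hP,
      one_mulVec]
  exact (sq_eq_sq₀ (vnorm_nonneg _) (vnorm_nonneg _)).1 h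

lemma vnorm_transpose_mulVec_le (hP : Pᵀ * P = 1) (w : ι → ℝ) :
    vnorm (Pᵀ *ᵥ w) ≤ vnorm w := by
  have h : vnorm (Pᵀ *ᵥ w) ^ 2 ≤ vnorm w * vnorm (Pᵀ *ᵥ w) :=
    calc vnorm (Pᵀ *ᵥ w) ^ 2 = w ⬝ᵥ (P *ᵥ (Pᵀ *ᵥ w)) := by
          rw [vnorm_sq, dotProduct_mulVec w P, ← mulVec_transpose]
      _ ≤ vnorm w * vnorm (P *ᵥ (Pᵀ *ᵥ w)) := dotProduct_le_vnorm_mul_vnorm _ _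
      _ = vnorm w * vnorm (Pᵀ *ᵥ w) := by rw [vnorm_mulVec_of_transpose_mul_self_eq_one hP]
  nlinarith [vnorm_nonneg (Pᵀ *ᵥ w), vnorm_nonneg w]

omit [Fintype κ] in
lemma transpose_mul_self_submatrix_eq_one (hP : Pᵀ * P = 1) {κ' : Type*} [DecidableEq κ']
    {f : κ' → κ} (hf : Function.Injective f) :
    (P.submatrix id f)ᵀ * P.submatrix id f = 1 := by
  rw [transpose_submatrix, ← submatrix_mul _ _ _ _ _ Function.bijective_id, hP,
    submatrix_one _ hf]

end OrthonormalColumns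

lemma exists_vnorm_eq_one_forall_mulVec_eq_zero {ι κ : Type*} [Fintype ι] [Fintype κ]
    (W : Matrix ι κ ℝ) (s : Finset ι) (hs : s.card < Fintype.card κ) :
    ∃ c : κ → ℝ, vnorm c = 1 ∧ ∀ i ∈ s, (W *ᵥ c) i = 0 := by
  let f : (κ → ℝ) →ₗ[ℝ] (s → ℝ) := LinearMap.funLeft ℝ ℝ ((↑) : s → ι) ∘ₗ W.mulVecLin
  obtain ⟨c, hc, hc0⟩ := Submodule.exists_mem_ne_zero_of_ne_bot
    (LinearMap.ker_ne_bot_of_finrank_lt (f := f) (by simpa using hs))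
  refine ⟨(vnorm c)⁻¹ • c, ?_, fun i hi => ?_⟩
  · rw [vnorm_smul, abs_inv, abs_of_nonneg (vnorm_nonneg c),
      inv_mul_cancel₀ (vnorm_eq_zero.not.2 hc0)]
  · rw [mulVec_smul, Pi.smul_apply, smul_eq_mul, mul_eq_zero]
    exact Or.inr (congrFun hc ⟨i, hi⟩)

lemma sdiag_mulVec_apply {m : ℕ} (σ : ℕ → ℝ) (w : Fin m → ℝ) (j : Fin m) :
    (sdiag σ *ᵥ w) j = σ (j + 1) * w j := by
  simp [sdiag, mulVec, dotProduct, ite_mul]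

lemma sdiag_submatrix_castLE {k r : ℕ} (h : k ≤ r) (σ : ℕ → ℝ) :
    (sdiag (m := r) σ).submatrix (Fin.castLE h) (Fin.castLE h) = sdiag σ := by
  ext i j
  simp [sdiag, Fin.ext_iff]

lemma transpose_mul_svd_mul_submatrix_castLE {N n r k : ℕ} {U : Matrix (Fin N) (Fin r) ℝ}
    {V : Matrix (Fin n) (Fin r) ℝ} (hU : Uᵀ * U = 1) (hV : Vᵀ * V = 1) (σ : ℕ → ℝ)
    (h : k ≤ r) :
    (U.submatrix id (Fin.castLE h))ᵀ * (U * sdiag (m := r) σ * Vᵀ) *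
      V.submatrix id (Fin.castLE h) = sdiag σ := by
  rw [transpose_submatrix, ← submatrix_id_id (U * _ * _),
    ← submatrix_mul _ _ _ _ _ Function.bijective_id,
    ← submatrix_mul _ _ _ _ _ Function.bijective_id, ← Matrix.mul_assoc, ← Matrix.mul_assoc, hU,
    Matrix.one_mul, Matrix.mul_assoc, hV, Matrix.mul_one, sdiag_submatrix_castLE]

lemma vnorm_svd_mulVec_le {N n m k : ℕ} {Ut : Matrix (Fin N) (Fin m) ℝ}
    {Vt : Matrix (Fin n) (Fin m) ℝ} {σt : ℕ → ℝ} (hUt : Utᵀ * Ut = 1) (hVt : Vtᵀ * Vt = 1)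
    (hdec : ∀ j, 1 ≤ j → σt (j + 1) ≤ σt j) (hnn : ∀ j, 1 ≤ j → 0 ≤ σt j) (hk : 1 ≤ k)
    {x : Fin n → ℝ} (hx : ∀ j : Fin m, (j : ℕ) < k - 1 → (Vtᵀ *ᵥ x) j = 0) :
    vnorm ((Ut * sdiag (m := m) σt * Vtᵀ) *ᵥ x) ≤ σt k * vnorm x := by
  have hσk := hnn k hk
  have hentry : ∀ j : Fin m, |σt (j + 1) * (Vtᵀ *ᵥ x) j| ≤ |σt k * (Vtᵀ *ᵥ x) j| := by
    intro j
    rcases lt_or_ge (j : ℕ) (k - 1) with hj | hj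
    · simp [hx j hj]
    · rw [abs_mul, abs_mul, abs_of_nonneg (hnn _ le_add_self), abs_of_nonneg hσk]
      exact mul_le_mul_of_nonneg_right
        (antitoneOn_nat_Ici_of_succ_le hdec hk (by simp) (by omega)) (abs_nonneg _)
  calc vnorm ((Ut * sdiag (m := m) σt * Vtᵀ) *ᵥ x) = vnorm (sdiag σt *ᵥ (Vtᵀ *ᵥ x)) := by
        rw [← mulVec_mulVec, ← mulVec_mulVec, vnorm_mulVec_of_transpose_mul_self_eq_one hUt]
    _ ≤ vnorm (σt k • (Vtᵀ *ᵥ x)) :=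
        vnorm_le_vnorm_of_abs_le fun j => by simpa [sdiag_mulVec_apply] using hentry j
    _ = σt k * vnorm (Vtᵀ *ᵥ x) := by rw [vnorm_smul, abs_of_nonneg hσk]
    _ ≤ σt k * vnorm x := mul_le_mul_of_nonneg_left (vnorm_transpose_mulVec_le hVt x) hσk

lemma sub_opNorm_le_vnorm_sdiag_add_mulVec {k : ℕ} {σ : ℕ → ℝ}
    (hdec : ∀ j, 1 ≤ j → σ (j + 1) ≤ σ j) (B : Matrix (Fin k) (Fin k) ℝ) {c : Fin k → ℝ}
    (hc : vnorm c = 1) :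
    σ k - opNorm B ≤ vnorm ((sdiag σ + B) *ᵥ c) := by
  have hD : σ k ≤ vnorm (sdiag σ *ᵥ c) := by
    rcases le_or_gt (σ k) 0 with hk | hk
    · exact hk.trans (vnorm_nonneg _)
    calc σ k = vnorm (σ k • c) := by rw [vnorm_smul, hc, abs_of_pos hk, mul_one]
      _ ≤ vnorm (sdiag σ *ᵥ c) := vnorm_le_vnorm_of_abs_le fun j => by
          have hj : σ k ≤ σ (j + 1) :=
            antitoneOn_nat_Ici_of_succ_le hdec (Nat.le_add_left 1 j)
              (Nat.one_le_of_lt j.isLt) j.isLt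
          rw [sdiag_mulVec_apply, Pi.smul_apply, smul_eq_mul, abs_mul, abs_mul,
            abs_of_pos hk, abs_of_pos (hk.trans_le hj)]
          exact mul_le_mul_of_nonneg_right hj (abs_nonneg _)
  have hB : vnorm (B *ᵥ c) ≤ opNorm B := by
    simpa [hc] using vnorm_mulVec_le_opNorm B c
  have htri : vnorm (sdiag σ *ᵥ c) ≤ vnorm ((sdiag σ + B) *ᵥ c) + vnorm (B *ᵥ c) := by
    simpa only [add_mulVec, add_sub_cancel_right] using
      vnorm_sub_le ((sdiag (m := k) σ + B) *ᵥ c) (B *ᵥ c)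
  linarith

theorem stmt7_singular_value_lower_bound_general
    (N n r : ℕ)
    (A E : Matrix (Fin N) (Fin n) ℝ)
    (U : Matrix (Fin N) (Fin r) ℝ) (V : Matrix (Fin n) (Fin r) ℝ) (σ : ℕ → ℝ)
    (hU : Uᵀ * U = 1) (hV : Vᵀ * V = 1) (hA : A = U * sdiag (m := r) σ * Vᵀ)
    (hσdec : ∀ j, 1 ≤ j → σ (j + 1) ≤ σ j)
    (m : ℕ)
    (Ut : Matrix (Fin N) (Fin m) ℝ) (Vt : Matrix (Fin n) (Fin m) ℝ) (σt : ℕ → ℝ)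
    (hUt : Utᵀ * Ut = 1) (hVt : Vtᵀ * Vt = 1)
    (hAt : A + E = Ut * sdiag (m := m) σt * Vtᵀ)
    (hσtdec : ∀ j, 1 ≤ j → σt (j + 1) ≤ σt j)
    (hσtnn : ∀ j, 1 ≤ j → 0 ≤ σt j)
    (k : ℕ) (hk1 : 1 ≤ k) (hkr : k ≤ r) :
    σ k - opNorm ((U.submatrix id (Fin.castLE hkr))ᵀ * E *
        V.submatrix id (Fin.castLE hkr)) ≤ σt k := by
  set Uk := U.submatrix id (Fin.castLE hkr)
  set Vk := V.submatrix id (Fin.castLE hkr)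
  have hUk : Ukᵀ * Uk = 1 := transpose_mul_self_submatrix_eq_one hU (Fin.castLE_injective hkr)
  have hVk : Vkᵀ * Vk = 1 := transpose_mul_self_submatrix_eq_one hV (Fin.castLE_injective hkr)
  obtain ⟨c, hc, hperp⟩ := exists_vnorm_eq_one_forall_mulVec_eq_zero (Vtᵀ * Vk)
    {j : Fin m | (j : ℕ) < k - 1} (by
      rw [Fin.card_filter_val_lt, Fintype.card_fin]
      exact (min_le_right _ _).trans_lt (Nat.sub_lt hk1 one_pos))
  have hcompress : sdiag σ + Ukᵀ * E * Vk = Ukᵀ * (A + E) * Vk := by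
    rw [Matrix.mul_add, Matrix.add_mul, hA, transpose_mul_svd_mul_submatrix_castLE hU hV]
  calc σ k - opNorm (Ukᵀ * E * Vk) ≤ vnorm ((sdiag σ + Ukᵀ * E * Vk) *ᵥ c) :=
        sub_opNorm_le_vnorm_sdiag_add_mulVec hσdec _ hc
    _ = vnorm (Ukᵀ *ᵥ ((A + E) *ᵥ (Vk *ᵥ c))) := by rw [hcompress, mulVec_mulVec, mulVec_mulVec]
    _ ≤ vnorm ((A + E) *ᵥ (Vk *ᵥ c)) := vnorm_transpose_mulVec_le hUk _
    _ ≤ σt k * vnorm (Vk *ᵥ c) := by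
        rw [hAt]
        refine vnorm_svd_mulVec_le hUt hVt hσtdec hσtnn hk1 fun j hj => ?_
        rw [mulVec_mulVec]
        exact hperp j (by simpa using hj)
    _ = σt k := by rw [vnorm_mulVec_of_transpose_mul_self_eq_one hVk, hc, mul_one]

/-- Theorem 7 of the paper, lower bound, deterministic form. -/
theorem stmt7_singular_value_lower_bound
    (N n r : ℕ) (hN : 0 < N) (hn : 0 < n) (hr : 0 < r)
    (A E : Matrix (Fin N) (Fin n) ℝ)
    (U : Matrix (Fin N) (Fin r) ℝ) (V : Matrix (Fin n) (Fin r) ℝ) (σ : ℕ → ℝ)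
    (hU : Uᵀ * U = 1) (hV : Vᵀ * V = 1) (hA : A = U * sdiag (m := r) σ * Vᵀ)
    (hσpos : ∀ j, 1 ≤ j → j ≤ r → 0 < σ j)
    (hσdec : ∀ j, 1 ≤ j → σ (j + 1) ≤ σ j)
    (hσzero : ∀ j, r < j → σ j = 0)
    (m : ℕ) (hm : m = min N n)
    (Ut : Matrix (Fin N) (Fin m) ℝ) (Vt : Matrix (Fin n) (Fin m) ℝ) (σt : ℕ → ℝ)
    (hUt : Utᵀ * Ut = 1) (hVt : Vtᵀ * Vt = 1)
    (hAt : A + E = Ut * sdiag (m := m) σt * Vtᵀ)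
    (hσtdec : ∀ j, 1 ≤ j → σt (j + 1) ≤ σt j)
    (hσtnn : ∀ j, 1 ≤ j → 0 ≤ σt j)
    (k : ℕ) (hk1 : 1 ≤ k) (hkr : k ≤ r) :
    σ k - opNorm ((U.submatrix id (Fin.castLE hkr))ᵀ * E *
        V.submatrix id (Fin.castLE hkr)) ≤ σt k :=
  stmt7_singular_value_lower_bound_general N n r A E U V σ hU hV hA hσdec m Ut Vt σt hUt hVt hAt
    hσtdec hσtnn k hk1 hkr
end
end

section
/- Let U, V ∈ ℝ^{n×r} have orthonormal columns and let ⦀·⦀ be any normalized unitarily invariant norm on n×r real matrices. Then there exists an orthogonal matrix O ∈ ℝ^{r×r} such that ⦀UO − V⦀ ≤ √2·⦀(I_n − UUᵀ)·V⦀. (The singular values of (I_n − UUᵀ)·V are the sines of the r principal angles between the column spans of U and V.) -/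
open MeasureTheory ProbabilityTheory Matrix

noncomputable section

/-!
Take a singular value decomposition `Uᵀ V = W diag(c) Pᵀ` (the `cᵢ ≥ 0` are the cosines of the
principal angles) and `O = W Pᵀ`. In the bases `U W` and `V P` the cross Gram matrix `Uᵀ V` is
`diag(c)`, so `U - V` and `(1 - U Uᵀ) V` have the diagonal Gram matrices `diag(2 - 2c)` and
`diag(1 - c²)`. A matrix with Gram matrix `diag(d)` is an orthogonal matrix times the rectangular
diagonal matrix `diag(√d)`, so by unitary invariance both norms are norms of rectangular diagonal
matrices, and `2 - 2c ≤ 2(1 - c²)` since `0 ≤ c ≤ 1`. Finally, a unitarily invariant seminorm is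
monotone in the absolute values of the diagonal entries: shrinking one entry by a factor
`t ∈ [-1, 1]` is a convex combination of the matrix and its reflection in that coordinate.
-/

section Gram

variable {m k : Type*} [Fintype m] [DecidableEq k]

lemma transpose_mul_self_mul_orthogonal [Fintype k] {X : Matrix m k ℝ} {Q : Matrix k k ℝ}
    (hX : Xᵀ * X = 1) (hQ : Qᵀ * Q = 1) : (X * Q)ᵀ * (X * Q) = 1 := by
  rw [transpose_mul, Matrix.mul_assoc, ← Matrix.mul_assoc Xᵀ, hX, Matrix.one_mul, hQ]

lemma transpose_mul_self_sub_eq_diagonal {U V : Matrix m k ℝ} {c : k → ℝ}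
    (hU : Uᵀ * U = 1) (hV : Vᵀ * V = 1) (hUV : Uᵀ * V = diagonal c) :
    (U - V)ᵀ * (U - V) = diagonal fun i => 2 - 2 * c i := by
  have hVU : Vᵀ * U = diagonal c := by
    rw [← diagonal_transpose, ← hUV, transpose_mul, transpose_transpose]
  rw [transpose_sub, Matrix.sub_mul, Matrix.mul_sub, Matrix.mul_sub, hU, hV, hUV, hVU,
    ← diagonal_one, diagonal_sub, diagonal_sub, diagonal_sub]
  congr 1
  funext i
  ring

lemma transpose_mul_self_orthogonalComplement_eq_diagonal [Fintype k] [DecidableEq m]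
    {U V : Matrix m k ℝ} {c : k → ℝ} (hU : Uᵀ * U = 1) (hV : Vᵀ * V = 1)
    (hUV : Uᵀ * V = diagonal c) :
    ((1 - U * Uᵀ) * V)ᵀ * ((1 - U * Uᵀ) * V) = diagonal fun i => 1 - c i ^ 2 := by
  have hproj : (1 - U * Uᵀ)ᵀ * (1 - U * Uᵀ) = 1 - U * Uᵀ := by
    rw [transpose_sub, transpose_one, transpose_mul, transpose_transpose, Matrix.sub_mul,
      Matrix.one_mul, Matrix.mul_sub, Matrix.mul_one, Matrix.mul_assoc U, ← Matrix.mul_assoc Uᵀ,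
      hU, Matrix.one_mul, sub_self, sub_zero]
  have hVU : Vᵀ * U = diagonal c := by
    rw [← diagonal_transpose, ← hUV, transpose_mul, transpose_transpose]
  rw [transpose_mul, Matrix.mul_assoc, ← Matrix.mul_assoc _ _ V, hproj, Matrix.sub_mul,
    Matrix.one_mul, Matrix.mul_sub, hV, Matrix.mul_assoc, ← Matrix.mul_assoc Vᵀ, hVU, hUV,
    diagonal_mul_diagonal, ← diagonal_one, diagonal_sub]
  simp only [sq]

lemma nonneg_of_transpose_mul_self_eq_diagonal {X : Matrix m k ℝ} {d : k → ℝ}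
    (hX : Xᵀ * X = diagonal d) (i : k) : 0 ≤ d i := by
  rw [← diagonal_apply_eq d i, ← hX, mul_apply]
  exact Finset.sum_nonneg fun p _ => mul_self_nonneg _

lemma diagonal_transpose_mul_self_eq_one [Fintype k] {e : k → ℝ} (he : ∀ i, e i * e i = 1) :
    (diagonal e)ᵀ * diagonal e = 1 := by
  rw [diagonal_transpose, diagonal_mul_diagonal, ← diagonal_one]
  exact congrArg diagonal (funext he)

end Gram

def rectDiagonal {n r : ℕ} (d : Fin r → ℝ) : Matrix (Fin n) (Fin r) ℝ :=
  Matrix.of fun p q => if (p : ℕ) = q then d q else 0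

lemma rectDiagonal_eq_diagonal {r : ℕ} (d : Fin r → ℝ) :
    (rectDiagonal d : Matrix (Fin r) (Fin r) ℝ) = diagonal d := by
  ext p q
  by_cases h : p = q
  · simp [rectDiagonal, h]
  · simp [rectDiagonal, Fin.val_inj, h]

lemma rectDiagonal_mul_diagonal {n r : ℕ} (d e : Fin r → ℝ) :
    (rectDiagonal d : Matrix (Fin n) (Fin r) ℝ) * diagonal e = rectDiagonal (d * e) := by
  ext p q
  simp [rectDiagonal, mul_diagonal, ite_mul]

lemma mul_rectDiagonal_apply {m n r : ℕ} (hrn : r ≤ n) (A : Matrix (Fin m) (Fin n) ℝ)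
    (d : Fin r → ℝ) (p : Fin m) (q : Fin r) :
    (A * (rectDiagonal d : Matrix (Fin n) (Fin r) ℝ)) p q = A p (Fin.castLE hrn q) * d q := by
  rw [mul_apply, Finset.sum_eq_single (Fin.castLE hrn q)]
  · simp [rectDiagonal]
  · intro k _ hk
    have : (k : ℕ) ≠ q := fun h => hk (Fin.ext h)
    simp [rectDiagonal, this]
  · simp

lemma exists_orthogonal_eq_mul_rectDiagonal {n r : ℕ} (hrn : r ≤ n)
    {X : Matrix (Fin n) (Fin r) ℝ} {d : Fin r → ℝ} (hX : Xᵀ * X = diagonal d) :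
    ∃ Q : Matrix (Fin n) (Fin n) ℝ, Qᵀ * Q = 1 ∧
      X = Q * (rectDiagonal (fun i => √(d i)) : Matrix (Fin n) (Fin r) ℝ) := by
  let col : Fin r → EuclideanSpace ℝ (Fin n) := fun i => WithLp.toLp 2 (Xᵀ i)
  have hcol : ∀ i j, inner ℝ (col i) (col j) = diagonal d i j := by
    intro i j
    rw [← hX, EuclideanSpace.inner_toLp_toLp, mul_apply, dotProduct]
    simp [mul_comm]
  have hd := nonneg_of_transpose_mul_self_eq_diagonal hX
  -- the normalized nonzero columns, placed at the indices `< r`, extend to an orthonormal basis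
  let v : Fin n → EuclideanSpace ℝ (Fin n) := fun k =>
    if h : (k : ℕ) < r then (√(d ⟨k, h⟩))⁻¹ • col ⟨k, h⟩ else 0
  let s : Set (Fin n) := {k | ∃ h : (k : ℕ) < r, d ⟨k, h⟩ ≠ 0}
  have hv : Orthonormal ℝ (s.domRestrict v) := by
    rw [orthonormal_iff_ite]
    rintro ⟨k, hk, hdk⟩ ⟨l, hl, hdl⟩
    simp only [Set.domRestrict_apply, v, dif_pos hk, dif_pos hl]
    rw [inner_smul_left, inner_smul_right, hcol]
    by_cases hkl : k = l
    · subst hkl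
      simp only [diagonal_apply_eq, if_true, conj_trivial]
      rw [← mul_assoc, ← mul_inv, Real.mul_self_sqrt (hd _), inv_mul_cancel₀ hdk]
    · have : (⟨k, hk⟩ : Fin r) ≠ ⟨l, hl⟩ := fun h => hkl (Fin.ext (Fin.mk.inj h))
      simp [diagonal_apply_ne _ this, hkl]
  obtain ⟨b, hb⟩ := hv.exists_orthonormalBasis_extension_of_card_eq (by simp)
  have hQ := (EuclideanSpace.basisFun (Fin n) ℝ).toMatrix_orthonormalBasis_mem_orthogonal b
  refine ⟨_, (mem_orthogonalGroup_iff' _ _).mp hQ, ?_⟩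
  refine Matrix.ext fun p q => ?_
  rw [mul_rectDiagonal_apply hrn, Module.Basis.toMatrix_apply,
    OrthonormalBasis.coe_toBasis_repr_apply, EuclideanSpace.basisFun_repr]
  by_cases hq : d q = 0
  · have hXq : col q = 0 := inner_self_eq_zero.mp (by rw [hcol, diagonal_apply_eq, hq])
    have hXpq : X p q = 0 := congrArg (· p) hXq
    simp [hXpq, hq]
  · rw [hb _ ⟨q.isLt, hq⟩]
    simp only [Fin.val_castLE, Fin.is_lt, ↓reduceDIte, Fin.eta, PiLp.smul_apply, transpose_apply,
      smul_eq_mul, v, col]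
    have hsq : √(d q) ≠ 0 := Real.sqrt_ne_zero'.mpr ((hd q).lt_of_ne' hq)
    field_simp

lemma exists_svd {r : ℕ} (M : Matrix (Fin r) (Fin r) ℝ) :
    ∃ (W P : Matrix (Fin r) (Fin r) ℝ) (c : Fin r → ℝ),
      Wᵀ * W = 1 ∧ Pᵀ * P = 1 ∧ 0 ≤ c ∧ M = W * diagonal c * Pᵀ := by
  have hS : (Mᵀ * M).IsHermitian := by
    simpa using isHermitian_conjTranspose_mul_self M
  set P : Matrix (Fin r) (Fin r) ℝ := (hS.eigenvectorUnitary : Matrix (Fin r) (Fin r) ℝ)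
  have hP : Pᵀ * P = 1 := by
    simpa [star_eq_conjTranspose] using Unitary.coe_star_mul_self hS.eigenvectorUnitary
  have hMP : (M * P)ᵀ * (M * P) = diagonal hS.eigenvalues := by
    have h := hS.conjStarAlgAut_star_eigenvectorUnitary
    rw [Unitary.conjStarAlgAut_star_apply] at h
    simpa [star_eq_conjTranspose, Matrix.mul_assoc] using h
  obtain ⟨W, hW, hMPW⟩ := exists_orthogonal_eq_mul_rectDiagonal le_rfl hMP
  refine ⟨W, P, fun i => √(hS.eigenvalues i), hW, hP, fun i => Real.sqrt_nonneg _, ?_⟩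
  rw [← rectDiagonal_eq_diagonal, ← hMPW, Matrix.mul_assoc, mul_eq_one_comm.mp hP, Matrix.mul_one]

structure IsUnitarilyInvariantSeminorm {n r : ℕ} (N : Matrix (Fin n) (Fin r) ℝ → ℝ) : Prop where
  add_le : ∀ M₁ M₂, N (M₁ + M₂) ≤ N M₁ + N M₂
  smul : ∀ (c : ℝ) M, N (c • M) = |c| * N M
  orthogonal_mul_mul : ∀ (Q₁ : Matrix (Fin n) (Fin n) ℝ) (Q₂ : Matrix (Fin r) (Fin r) ℝ) M,
    Q₁ᵀ * Q₁ = 1 → Q₂ᵀ * Q₂ = 1 → N (Q₁ * M * Q₂) = N M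

namespace IsUnitarilyInvariantSeminorm

variable {n r : ℕ} {N : Matrix (Fin n) (Fin r) ℝ → ℝ}

lemma apply_orthogonal_mul (hN : IsUnitarilyInvariantSeminorm N) {Q : Matrix (Fin n) (Fin n) ℝ}
    (hQ : Qᵀ * Q = 1) (M : Matrix (Fin n) (Fin r) ℝ) : N (Q * M) = N M := by
  simpa using hN.orthogonal_mul_mul Q 1 M hQ (by simp)

lemma apply_mul_orthogonal (hN : IsUnitarilyInvariantSeminorm N) {Q : Matrix (Fin r) (Fin r) ℝ}
    (hQ : Qᵀ * Q = 1) (M : Matrix (Fin n) (Fin r) ℝ) : N (M * Q) = N M := by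
  simpa using hN.orthogonal_mul_mul 1 Q M (by simp) hQ

lemma apply_rectDiagonal_update_le (hN : IsUnitarilyInvariantSeminorm N) (d : Fin r → ℝ)
    (j : Fin r) {x : ℝ} (hx : |x| ≤ |d j|) :
    N (rectDiagonal (Function.update d j x)) ≤ N (rectDiagonal d) := by
  set t := x / d j
  have htx : t * d j = x := by
    by_cases hd : d j = 0
    · rw [hd, abs_zero, abs_nonpos_iff] at hx
      simp [hd, hx]
    · exact div_mul_cancel₀ x hd
  have ht : |t| ≤ 1 := by
    rw [abs_div]
    exact div_le_one_of_le₀ hx (abs_nonneg _)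
  obtain ⟨ht₁, ht₂⟩ := abs_le.mp ht
  set e := Function.update (1 : Fin r → ℝ) j (-1)
  have he : (diagonal e)ᵀ * diagonal e = 1 :=
    diagonal_transpose_mul_self_eq_one fun i => by
      by_cases hi : i = j <;> simp [e, hi]
  have hsplit : (rectDiagonal (Function.update d j x) : Matrix (Fin n) (Fin r) ℝ) =
      ((1 + t) / 2) • rectDiagonal d + ((1 - t) / 2) • (rectDiagonal d * diagonal e) := by
    rw [rectDiagonal_mul_diagonal]
    ext p q
    simp only [rectDiagonal, of_apply, smul_of, Pi.mul_apply, Matrix.add_apply, Pi.smul_apply,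
      smul_eq_mul, mul_ite, mul_zero]
    split_ifs
    · by_cases hq : q = j
      · subst hq
        simp only [e, Function.update_self, ← htx]
        ring
      · simp only [e, Function.update_of_ne hq, Pi.one_apply]
        ring
    · exact (add_zero 0).symm
  calc N (rectDiagonal (Function.update d j x))
      ≤ N (((1 + t) / 2) • rectDiagonal d) +
          N (((1 - t) / 2) • (rectDiagonal d * diagonal e)) := by
        rw [hsplit]
        exact hN.add_le _ _
    _ = N (rectDiagonal d) := by
        rw [hN.smul, hN.smul, hN.apply_mul_orthogonal he, abs_of_nonneg (by linarith),
          abs_of_nonneg (by linarith)]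
        ring

lemma apply_rectDiagonal_mono (hN : IsUnitarilyInvariantSeminorm N) {a b : Fin r → ℝ}
    (hab : ∀ i, |a i| ≤ |b i|) : N (rectDiagonal a) ≤ N (rectDiagonal b) := by
  suffices h : ∀ s : Finset (Fin r), N (rectDiagonal (s.piecewise a b)) ≤ N (rectDiagonal b) by
    simpa using h Finset.univ
  intro s
  induction s using Finset.induction_on with
  | empty => simp
  | insert j s hj ih =>
    rw [Finset.piecewise_insert]
    refine (hN.apply_rectDiagonal_update_le _ j ?_).trans ih
    rw [Finset.piecewise_eq_of_notMem _ _ _ hj]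
    exact hab j

lemma apply_eq_apply_rectDiagonal_sqrt (hN : IsUnitarilyInvariantSeminorm N) (hrn : r ≤ n)
    {X : Matrix (Fin n) (Fin r) ℝ} {d : Fin r → ℝ} (hX : Xᵀ * X = diagonal d) :
    N X = N (rectDiagonal fun i => √(d i)) := by
  obtain ⟨Q, hQ, rfl⟩ := exists_orthogonal_eq_mul_rectDiagonal hrn hX
  exact hN.apply_orthogonal_mul hQ _

lemma apply_le_of_transpose_mul_self_eq_diagonal (hN : IsUnitarilyInvariantSeminorm N)
    (hrn : r ≤ n) {X Y : Matrix (Fin n) (Fin r) ℝ} {a b : Fin r → ℝ}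
    (hX : Xᵀ * X = diagonal a) (hY : Yᵀ * Y = diagonal b) (hab : a ≤ b) : N X ≤ N Y := by
  rw [hN.apply_eq_apply_rectDiagonal_sqrt hrn hX, hN.apply_eq_apply_rectDiagonal_sqrt hrn hY]
  refine hN.apply_rectDiagonal_mono fun i => ?_
  rw [abs_of_nonneg (Real.sqrt_nonneg _), abs_of_nonneg (Real.sqrt_nonneg _)]
  exact Real.sqrt_le_sqrt (hab i)

lemma procrustes_bound_of_transpose_mul_eq_diagonal (hN : IsUnitarilyInvariantSeminorm N)
    (hrn : r ≤ n) {U V : Matrix (Fin n) (Fin r) ℝ} {c : Fin r → ℝ} (hU : Uᵀ * U = 1)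
    (hV : Vᵀ * V = 1) (hUV : Uᵀ * V = diagonal c) (hc : 0 ≤ c) :
    N (U - V) ≤ √2 * N ((1 - U * Uᵀ) * V) := by
  set B := (1 - U * Uᵀ) * V
  have hB : Bᵀ * B = diagonal fun i => 1 - c i ^ 2 :=
    transpose_mul_self_orthogonalComplement_eq_diagonal hU hV hUV
  have hc₁ : ∀ i, c i ≤ 1 := fun i => by
    nlinarith [nonneg_of_transpose_mul_self_eq_diagonal hB i, hc i]
  have h2B : (√2 • B)ᵀ * (√2 • B) = diagonal fun i => 2 * (1 - c i ^ 2) := by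
    rw [transpose_smul, Matrix.smul_mul, Matrix.mul_smul, smul_smul, hB,
      Real.mul_self_sqrt zero_le_two, ← diagonal_smul]
    rfl
  calc N (U - V) ≤ N (√2 • B) :=
        hN.apply_le_of_transpose_mul_self_eq_diagonal hrn
          (transpose_mul_self_sub_eq_diagonal hU hV hUV) h2B fun i => by
            nlinarith [mul_nonneg (hc i) (sub_nonneg.2 (hc₁ i))]
    _ = √2 * N B := by rw [hN.smul, abs_of_nonneg (Real.sqrt_nonneg 2)]

end IsUnitarilyInvariantSeminorm


theorem stmt13_procrustes_unitarily_invariant_general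
    (n r : ℕ) (hrn : r ≤ n)
    (U V : Matrix (Fin n) (Fin r) ℝ) (hU : Uᵀ * U = 1) (hV : Vᵀ * V = 1)
    (nnorm : Matrix (Fin n) (Fin r) ℝ → ℝ)
    (hnadd : ∀ M₁ M₂, nnorm (M₁ + M₂) ≤ nnorm M₁ + nnorm M₂)
    (hnsmul : ∀ (c : ℝ) M, nnorm (c • M) = |c| * nnorm M)
    (hninv : ∀ (Q₁ : Matrix (Fin n) (Fin n) ℝ) (Q₂ : Matrix (Fin r) (Fin r) ℝ)
      (M : Matrix (Fin n) (Fin r) ℝ),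
      Q₁ᵀ * Q₁ = 1 → Q₂ᵀ * Q₂ = 1 → nnorm (Q₁ * M * Q₂) = nnorm M) :
    ∃ O : Matrix (Fin r) (Fin r) ℝ, Oᵀ * O = 1 ∧
      nnorm (U * O - V) ≤ Real.sqrt 2 * nnorm ((1 - U * Uᵀ) * V) := by
  have hN : IsUnitarilyInvariantSeminorm nnorm := ⟨hnadd, hnsmul, hninv⟩
  obtain ⟨W, P, c, hW, hP, hc, hUV⟩ := exists_svd (Uᵀ * V)
  have hPt : Pᵀᵀ * Pᵀ = 1 := by rw [transpose_transpose, mul_eq_one_comm.mp hP]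
  refine ⟨W * Pᵀ, transpose_mul_self_mul_orthogonal hW hPt, ?_⟩
  have hA : nnorm (U * (W * Pᵀ) - V) = nnorm (U * W - V * P) := by
    rw [← hN.apply_mul_orthogonal hP, Matrix.sub_mul, Matrix.mul_assoc, Matrix.mul_assoc, hP,
      Matrix.mul_one]
  have hB : nnorm ((1 - U * Uᵀ) * V) = nnorm ((1 - U * W * (U * W)ᵀ) * (V * P)) := by
    rw [transpose_mul, Matrix.mul_assoc U W, ← Matrix.mul_assoc W, mul_eq_one_comm.mp hW,
      Matrix.one_mul, ← Matrix.mul_assoc, hN.apply_mul_orthogonal hP]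
  have hUWVP : (U * W)ᵀ * (V * P) = diagonal c := by
    rw [transpose_mul, Matrix.mul_assoc, ← Matrix.mul_assoc Uᵀ, hUV]
    simp only [Matrix.mul_assoc, hP, Matrix.mul_one, ← Matrix.mul_assoc Wᵀ W, hW, Matrix.one_mul]
  rw [hA, hB]
  exact hN.procrustes_bound_of_transpose_mul_eq_diagonal hrn
    (transpose_mul_self_mul_orthogonal hU hW) (transpose_mul_self_mul_orthogonal hV hP) hUWVP hc

/-- inequality (12) of the paper: Procrustes bound for an arbitrary
normalized unitarily invariant norm. -/
theorem stmt13_procrustes_unitarily_invariant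
    (n r : ℕ) (hn : 0 < n) (hr : 0 < r) (hrn : r ≤ n)
    (U V : Matrix (Fin n) (Fin r) ℝ) (hU : Uᵀ * U = 1) (hV : Vᵀ * V = 1)
    (nnorm : Matrix (Fin n) (Fin r) ℝ → ℝ)
    (hnadd : ∀ M₁ M₂, nnorm (M₁ + M₂) ≤ nnorm M₁ + nnorm M₂)
    (hnsmul : ∀ (c : ℝ) M, nnorm (c • M) = |c| * nnorm M)
    (hndef : ∀ M, nnorm M = 0 ↔ M = 0)
    (hninv : ∀ (Q₁ : Matrix (Fin n) (Fin n) ℝ) (Q₂ : Matrix (Fin r) (Fin r) ℝ)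
      (M : Matrix (Fin n) (Fin r) ℝ),
      Q₁ᵀ * Q₁ = 1 → Q₂ᵀ * Q₂ = 1 → nnorm (Q₁ * M * Q₂) = nnorm M)
    (hnone : ∀ M : Matrix (Fin n) (Fin r) ℝ,
      (∀ p q, M p q = if p = (⟨0, hn⟩ : Fin n) ∧ q = (⟨0, hr⟩ : Fin r) then 1 else 0) →
      nnorm M = 1) :
    ∃ O : Matrix (Fin r) (Fin r) ℝ, Oᵀ * O = 1 ∧
      nnorm (U * O - V) ≤ Real.sqrt 2 * nnorm ((1 - U * Uᵀ) * V) :=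
  stmt13_procrustes_unitarily_invariant_general n r hrn U V hU hV nnorm hnadd hnsmul hninv
end
end
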